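/- Let α_1,…,α_n be pairwise distinct elements of a finite field F_q and let k, r be integers with 6 ≤ 2k ≤ n and 1 ≤ r ≤ k−1. Then G_1 · H_1ᵀ = 0 and the rows of H_1 are linearly independent over F_q; consequently H_1 is a parity check matrix for the code C_1 generated by G_1, i.e. the rows of H_1 form a basis of the dual code C_1^⊥ ⊆ F_q^{n+1}. -/

import Mathlib

open Finset Matrix

/-- Elementary symmetric polynomial `σ_t` evaluated at the values `x 0, …, x (m-1)`. -/
def esymmV {F : Type*} [CommRing F] {m : ℕ} (t : ℕ) (x : Fin m → F) : F :=
  ∑ A ∈ Finset.univ.powersetCard t, ∏ i ∈ A, x i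

/-- Complete homogeneous symmetric polynomial `S_t` evaluated at `x 0, …, x (m-1)`. -/
def hsymmV {F : Type*} [CommRing F] {m : ℕ} (t : ℕ) (x : Fin m → F) : F :=
  ∑ d ∈ Finset.Nat.antidiagonalTuple m t, ∏ i, x i ^ d i

/-- The exponent of the `i`-th row (0-indexed): the elements of
`{0,…,k−r−1} ∪ {k−r+1,…,k}` in increasing order. -/
def expo (k r : ℕ) (i : Fin k) : ℕ := if (i : ℕ) < k - r then (i : ℕ) else (i : ℕ) + 1

/-- The Vandermonde product `∏_{i<j} (α_j − α_i)`. -/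
def vand {F : Type*} [CommRing F] {n : ℕ} (α : Fin n → F) : F :=
  ∏ i : Fin n, ∏ j ∈ Finset.Ioi i, (α j - α i)

/-- The matrix `G_{r,k}`: rows are `(α_1^e, …, α_n^e)` for
`e ∈ {0,…,k−r−1} ∪ {k−r+1,…,k}` in increasing order. -/
def Grk {F : Type*} [Field F] {n : ℕ} (α : Fin n → F) (k r : ℕ) : Matrix (Fin k) (Fin n) F :=
  Matrix.of fun i j => α j ^ expo k r i

/-- The matrix `G_1`: `G_{r,k}` with the extra column `(0,…,0,1)ᵀ` appended. -/
def G1 {F : Type*} [Field F] {n : ℕ} (α : Fin n → F) (k r : ℕ) :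
    Matrix (Fin k) (Fin (n + 1)) F :=
  Matrix.of fun i j =>
    if hj : (j : ℕ) < n then α ⟨j, hj⟩ ^ expo k r i
    else if (i : ℕ) = k - 1 then 1 else 0

/-- The matrix `G_2`: `G_1` with the extra column `(0,…,0,1,δ)ᵀ` appended
(entry `1` in row `k−1`, i.e. index `k−2`, and `δ` in row `k`, i.e. index `k−1`). -/
def G2 {F : Type*} [Field F] {n : ℕ} (α : Fin n → F) (k r : ℕ) (δ : F) :
    Matrix (Fin k) (Fin (n + 2)) F :=
  Matrix.of fun i j =>
    if hj : (j : ℕ) < n then α ⟨j, hj⟩ ^ expo k r i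
    else if (j : ℕ) = n then (if (i : ℕ) = k - 1 then 1 else 0)
    else (if (i : ℕ) = k - 2 then 1 else if (i : ℕ) = k - 1 then δ else 0)

/-- `u_i = ∏_{j ≠ i} (α_i − α_j)⁻¹`. -/
def uCoef {F : Type*} [Field F] {n : ℕ} (α : Fin n → F) (i : Fin n) : F :=
  ∏ j ∈ Finset.univ.erase i, (α i - α j)⁻¹

/-- `Λ_{r,i} = ∑_{j=0}^{r} (−1)^j σ_j α_i^{(n−k)+(r−1)−j}`. -/
def Lam {F : Type*} [Field F] {n : ℕ} (α : Fin n → F) (k r : ℕ) (i : Fin n) : F :=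
  ∑ j ∈ Finset.range (r + 1), (-1 : F) ^ j * esymmV j α * α i ^ ((n - k) + (r - 1) - j)

/-- Every `k×k` submatrix of `G` is nonsingular. -/
def allSubNonsing {F : Type*} [Field F] {k m : ℕ} (G : Matrix (Fin k) (Fin m) F) : Prop :=
  ∀ c : Fin k → Fin m, Function.Injective c → (G.submatrix id c).det ≠ 0

/-- The linear code spanned by the rows of `G`. -/
def rowSpan {F : Type*} [Field F] {k m : ℕ} (G : Matrix (Fin k) (Fin m) F) :
    Submodule F (Fin m → F) :=
  Submodule.span F (Set.range fun i => G i)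

/-- The dual code `C^⊥ = {x : ∑ x_i c_i = 0 for all c ∈ C}`, as a set. -/
def dualSet {F : Type*} [Field F] {m : ℕ} (C : Set (Fin m → F)) : Set (Fin m → F) :=
  {x | ∀ c ∈ C, ∑ i, x i * c i = 0}

/-- The extended code of `C` with respect to `w`. -/
def extCode {F : Type*} [Field F] {m : ℕ} (C : Set (Fin m → F)) (w : Fin m → F) :
    Set (Fin (m + 1) → F) :=
  {y | ∃ c ∈ C, (∀ i : Fin m, y (Fin.castSucc i) = c i) ∧ y (Fin.last m) = ∑ i, w i * c i}

/-- The parity check matrix `H_{r,k}`: the first `n−k−1` rows are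
`(u_1 α_1^e, …, u_n α_n^e)` for `e = 0,…,n−k−2` and the last row is
`(u_1 Λ_{r,1}, …, u_n Λ_{r,n})`. -/
def Hrk {F : Type*} [Field F] {n : ℕ} (α : Fin n → F) (k r : ℕ) :
    Matrix (Fin (n - k)) (Fin n) F :=
  Matrix.of fun i j =>
    if (i : ℕ) < n - k - 1 then uCoef α j * α j ^ (i : ℕ)
    else uCoef α j * Lam α k r j

/-- The parity check matrix `H_1`. -/
def H1 {F : Type*} [Field F] {n : ℕ} (α : Fin n → F) (k r : ℕ) :
    Matrix (Fin (n - k + 1)) (Fin (n + 1)) F :=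
  Matrix.of fun i j =>
    if hj : (j : ℕ) < n then
      (if (i : ℕ) < n - k - 1 then uCoef α ⟨j, hj⟩ * α ⟨j, hj⟩ ^ (i : ℕ)
       else if (i : ℕ) = n - k - 1 then uCoef α ⟨j, hj⟩ * Lam α k r ⟨j, hj⟩
       else uCoef α ⟨j, hj⟩ * α ⟨j, hj⟩ ^ (n - k - 1))
    else (if (i : ℕ) = n - k then -1 else 0)

/-- The parity check matrix `H_2` (case `2 ≤ r`), with parameter `b`. -/
def H2 {F : Type*} [Field F] {n : ℕ} (α : Fin n → F) (k r : ℕ) (b : F) :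
    Matrix (Fin (n - k + 2)) (Fin (n + 2)) F :=
  Matrix.of fun i j =>
    if hj : (j : ℕ) < n then
      (if (i : ℕ) < n - k - 1 then uCoef α ⟨j, hj⟩ * α ⟨j, hj⟩ ^ (i : ℕ)
       else if (i : ℕ) = n - k - 1 then uCoef α ⟨j, hj⟩ * Lam α k r ⟨j, hj⟩
       else if (i : ℕ) = n - k then uCoef α ⟨j, hj⟩ * α ⟨j, hj⟩ ^ (n - k - 1)
       else uCoef α ⟨j, hj⟩ * α ⟨j, hj⟩ ^ (n - k))
    else if (j : ℕ) = n then
      (if (i : ℕ) = n - k then -1 else if (i : ℕ) = n - k + 1 then b else 0)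
    else (if (i : ℕ) = n - k + 1 then -1 else 0)

/-!
Write `L P = ∑ᵢ uᵢ P(αᵢ)`. By Lagrange interpolation `L P` is the coefficient of `X^(n-1)` in any
`P` of degree `< n`, so `L` kills every polynomial of degree `≤ n - 2`, and it kills every multiple
of the nodal polynomial `N = ∏ᵢ (X - αᵢ) = ∑ₜ (-1)^t σₜ X^(n-t)`. The rows of `G₁` and `H₁` are, on
the first `n` coordinates, the values `αⱼ^e` and `uⱼ Rᵢ(αⱼ)`, where `Rᵢ` is `X^i`, `Λ` or
`X^(n-k-1)`; hence each entry of `G₁ H₁ᵀ` is `L (X^e Rᵢ)` plus a product of last coordinates.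
The polynomial `Λ` is the sum of the terms `t ≤ r` of `N`, divided by `X^(k-r+1)`, so for
`e ≠ k - r` the product `X^e Λ` is, modulo `N`, of degree `≤ n - 2`.

The polynomials behind the rows of either matrix have pairwise distinct degrees `< n`, so they are
linearly independent and stay so after evaluation at the `n` nodes. Then `k + (n - k + 1) = n + 1`
forces the rows of `H₁` to span the whole dual of `C₁`.
-/

open Polynomial

theorem Polynomial.linearIndependent_of_natDegree_injective {K ι : Type*} [Field K]
    {P : ι → K[X]} (hP : ∀ i, P i ≠ 0) (hdeg : Function.Injective fun i => (P i).natDegree) :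
    LinearIndependent K P := by
  rw [linearIndependent_iff']
  intro s g hg i hi
  have hdeg_smul : ∀ j, g j ≠ 0 → (g j • P j).degree = (P j).natDegree := fun j hj => by
    rw [smul_eq_C_mul, degree_C_mul hj, degree_eq_natDegree (hP j)]
  have hsum := degree_sum_eq_of_disjoint (fun j => g j • P j) s fun x hx y hy hxy => by
    have hgx : g x ≠ 0 := fun h => hx.2 (by simp [h])
    have hgy : g y ≠ 0 := fun h => hy.2 (by simp [h])
    simp only [Function.onFun, Function.comp_apply, hdeg_smul x hgx, hdeg_smul y hgy, ne_eq,
      Nat.cast_inj]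
    exact fun h => hxy (hdeg h)
  rw [hg, degree_zero, eq_comm, Finset.sup_eq_bot_iff] at hsum
  by_contra hgi
  simpa [hdeg_smul i hgi] using hsum i hi

theorem linearIndependent_mul_eval {F ι : Type*} [Field F] [Fintype ι] {n : ℕ} {α : Fin n → F}
    (hα : Function.Injective α) {w : Fin n → F} (hw : ∀ j, w j ≠ 0) {P : ι → F[X]}
    (hP : LinearIndependent F P) (hdeg : ∀ i, (P i).degree < n) :
    LinearIndependent F fun i j => w j * (P i).eval (α j) := by
  rw [Fintype.linearIndependent_iff] at hP ⊢
  intro g hg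
  refine hP g (eq_zero_of_degree_lt_of_eval_index_eq_zero univ hα.injOn ?_ ?_)
  · rw [card_univ, Fintype.card_fin, ← mem_degreeLT]
    exact Submodule.sum_mem _ fun i _ => Submodule.smul_mem _ _ (mem_degreeLT.2 (hdeg i))
  · intro j _
    have h := congrFun hg j
    simp only [Finset.sum_apply, Pi.smul_apply, smul_eq_mul, Pi.zero_apply] at h
    simp only [eval_finsetSum, eval_smul, smul_eq_mul]
    refine (mul_eq_zero.1 ?_).resolve_left (hw j)
    rw [mul_sum, ← h]
    exact sum_congr rfl fun i _ => by ring

theorem mem_dualSet_rowSpan_iff {F : Type*} [Field F] {k m : ℕ} (G : Matrix (Fin k) (Fin m) F)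
    (x : Fin m → F) :
    x ∈ dualSet (rowSpan G : Set (Fin m → F)) ↔ G *ᵥ x = 0 := by
  change (∀ c ∈ rowSpan G, x ⬝ᵥ c = 0) ↔ _
  constructor
  · intro h
    funext a
    rw [mulVec, dotProduct_comm]
    exact h _ (Submodule.subset_span ⟨a, rfl⟩)
  · intro h c hc
    have hle : rowSpan G ≤ LinearMap.ker (dotProductEquiv F (Fin m) x) := by
      rw [rowSpan, Submodule.span_le]
      rintro - ⟨a, rfl⟩
      simpa [mulVec, dotProduct_comm] using congrFun h a
    simpa using hle hc

theorem rowSpan_eq_dualSet_of_mul_transpose_eq_zero {F : Type*} [Field F] {k l m : ℕ}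
    {G : Matrix (Fin k) (Fin m) F} {H : Matrix (Fin l) (Fin m) F} (hGH : G * Hᵀ = 0)
    (hG : LinearIndependent F fun a => G a) (hH : LinearIndependent F fun i => H i) (hdim : k + l = m) :
    (rowSpan H : Set (Fin m → F)) = dualSet (rowSpan G : Set (Fin m → F)) := by
  have hle : rowSpan H ≤ LinearMap.ker G.mulVecLin := by
    rw [rowSpan, Submodule.span_le]
    rintro - ⟨i, rfl⟩
    funext a
    simpa [mul_apply, mulVec, dotProduct] using congrFun (congrFun hGH a) i
  have hrankG : Module.finrank F (LinearMap.range G.mulVecLin) = k := by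
    simpa [Matrix.rank] using hG.rank_matrix
  have hker := LinearMap.finrank_range_add_finrank_ker G.mulVecLin
  have hH' : Module.finrank F (rowSpan H) = l := by
    rw [rowSpan, finrank_span_eq_card hH, Fintype.card_fin]
  have heq : rowSpan H = LinearMap.ker G.mulVecLin :=
    Submodule.eq_of_le_of_finrank_eq hle (by rw [Module.finrank_fin_fun] at hker; omega)
  ext x
  rw [SetLike.mem_coe, heq, LinearMap.mem_ker, mulVecLin_apply, mem_dualSet_rowSpan_iff]

theorem expo_le (k r : ℕ) (a : Fin k) : expo k r a ≤ k := by
  have := a.isLt; unfold expo; split <;> omega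

theorem expo_injective (k r : ℕ) : Function.Injective (expo k r) := by
  intro a b h
  unfold expo at h
  ext
  split at h <;> split at h <;> omega

theorem expo_ne_sub (k r : ℕ) (a : Fin k) : expo k r a ≠ k - r := by
  unfold expo; split <;> omega

theorem expo_eq_self_iff {k r : ℕ} (hr : 1 ≤ r) (a : Fin k) :
    expo k r a = k ↔ (a : ℕ) = k - 1 := by
  have := a.isLt; unfold expo; split <;> omega

section

variable {F : Type*} [Field F] {n : ℕ} {α : Fin n → F}

theorem uCoef_ne_zero (hα : Function.Injective α) (i : Fin n) : uCoef α i ≠ 0 :=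
  Lagrange.nodalWeight_ne_zero hα.injOn (mem_univ i)

theorem sum_uCoef_mul_eval (hα : Function.Injective α) {P : F[X]} (hP : P.degree < n) :
    ∑ i, uCoef α i * P.eval (α i) = P.coeff (n - 1) := by
  have h := Lagrange.coeff_eq_sum (s := univ) hα.injOn (P := P) (by simpa using hP)
  rw [card_univ, Fintype.card_fin] at h
  rw [h]
  refine sum_congr rfl fun i _ => ?_
  rw [uCoef, prod_inv_distrib, div_eq_mul_inv, mul_comm]

theorem sum_uCoef_mul_eval_eq_zero (hα : Function.Injective α) {P : F[X]}
    (hP : P.natDegree < n - 1) : ∑ i, uCoef α i * P.eval (α i) = 0 := by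
  rw [sum_uCoef_mul_eval hα (degree_le_natDegree.trans_lt (by exact_mod_cast (by omega)))]
  exact coeff_eq_zero_of_natDegree_lt (by omega)

theorem sum_uCoef_mul_pow (hα : Function.Injective α) {m : ℕ} (hm : m < n) :
    ∑ i, uCoef α i * α i ^ m = if m = n - 1 then 1 else 0 := by
  have h := sum_uCoef_mul_eval hα (P := X ^ m) (by rw [degree_X_pow]; exact_mod_cast hm)
  simpa [coeff_X_pow, eq_comm] using h

theorem nodal_univ_eq_sum_esymmV (α : Fin n → F) :
    Lagrange.nodal univ α = ∑ t ∈ range (n + 1), C ((-1) ^ t * esymmV t α) * X ^ (n - t) := by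
  have h := Multiset.prod_X_sub_X_eq_sum_esymm (univ.val.map α)
  simp only [Multiset.map_map, Multiset.card_map, card_val, card_univ, Fintype.card_fin,
    Finset.esymm_map_val] at h
  rw [Lagrange.nodal, Finset.prod_eq_multiset_prod]
  convert h using 2 with t
  · rfl
  · simp [esymmV, mul_assoc]

noncomputable def lamPoly (α : Fin n → F) (k r : ℕ) : F[X] :=
  ∑ t ∈ range (r + 1), C ((-1) ^ t * esymmV t α) * X ^ ((n - k) + (r - 1) - t)

variable {k r : ℕ}

theorem eval_lamPoly (i : Fin n) : (lamPoly α k r).eval (α i) = Lam α k r i := by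
  simp [lamPoly, Lam, eval_finsetSum]

theorem natDegree_lamPoly_le : (lamPoly α k r).natDegree ≤ (n - k) + (r - 1) :=
  natDegree_sum_le_of_forall_le _ _ fun _ _ =>
    (natDegree_C_mul_X_pow_le _ _).trans (Nat.sub_le _ _)

theorem coeff_lamPoly_top (hkn : k < n) :
    (lamPoly α k r).coeff ((n - k) + (r - 1)) = 1 := by
  rw [lamPoly, finsetSum_coeff, sum_eq_single 0]
  · simp [esymmV]
  · intro t ht ht0
    simp only [mem_range] at ht
    rw [coeff_C_mul_X_pow, if_neg (by omega)]
  · simp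

theorem monic_lamPoly (hkn : k < n) : (lamPoly α k r).Monic :=
  monic_of_natDegree_le_of_coeff_eq_one _ natDegree_lamPoly_le (coeff_lamPoly_top hkn)

theorem natDegree_lamPoly (hkn : k < n) : (lamPoly α k r).natDegree = (n - k) + (r - 1) :=
  natDegree_eq_of_le_of_coeff_ne_zero natDegree_lamPoly_le <| by
    rw [coeff_lamPoly_top hkn]; exact one_ne_zero

theorem sum_uCoef_mul_eval_X_pow_mul_lamPoly (hα : Function.Injective α) (hr : 1 ≤ r)
    (hrk : r ≤ k) (hkn : k < n) {e : ℕ} (he : e ≤ k) (hne : e ≠ k - r) :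
    ∑ j, uCoef α j * (X ^ e * lamPoly α k r).eval (α j) = 0 := by
  rcases Nat.lt_or_gt_of_ne hne with hlt | hgt
  · refine sum_uCoef_mul_eval_eq_zero hα (natDegree_mul_le.trans_lt ?_)
    rw [natDegree_X_pow]
    have := natDegree_lamPoly_le (α := α) (k := k) (r := r)
    omega
  · set c := e - (k - r + 1)
    set tail := ∑ t ∈ Ico (r + 1) (n + 1), C ((-1) ^ t * esymmV t α) * X ^ (n - t)
    have hsplit : X ^ e * lamPoly α k r = X ^ c * Lagrange.nodal univ α - X ^ c * tail := by
      rw [nodal_univ_eq_sum_esymmV, ← sum_range_add_sum_Ico _ (by omega : r + 1 ≤ n + 1),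
        mul_add, add_sub_cancel_right, lamPoly, mul_sum, mul_sum]
      refine sum_congr rfl fun t ht => ?_
      rw [mul_left_comm, mul_left_comm (X ^ c), ← pow_add, ← pow_add]
      congr 2
      simp only [mem_range] at ht
      omega
    have heval : ∀ j, (X ^ e * lamPoly α k r).eval (α j) = -(X ^ c * tail).eval (α j) := by
      intro j
      rw [hsplit, eval_sub, eval_mul, Lagrange.eval_nodal_at_node (mem_univ j), mul_zero,
        zero_sub]
    simp_rw [heval, mul_neg, sum_neg_distrib, neg_eq_zero]
    refine sum_uCoef_mul_eval_eq_zero hα (natDegree_mul_le.trans_lt ?_)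
    have htail : tail.natDegree ≤ n - (r + 1) :=
      natDegree_sum_le_of_forall_le _ _ fun t ht =>
        (natDegree_C_mul_X_pow_le _ _).trans (by simp only [mem_Ico] at ht; omega)
    rw [natDegree_X_pow]
    omega

noncomputable def h1RowPoly (α : Fin n → F) (k r : ℕ) (i : Fin (n - k + 1)) : F[X] :=
  if (i : ℕ) < n - k - 1 then X ^ (i : ℕ)
  else if (i : ℕ) = n - k - 1 then lamPoly α k r
  else X ^ (n - k - 1)

theorem H1_apply_castSucc (i : Fin (n - k + 1)) (j : Fin n) :
    H1 α k r i (Fin.castSucc j) = uCoef α j * (h1RowPoly α k r i).eval (α j) := by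
  simp only [H1, h1RowPoly, of_apply, Fin.val_castSucc, j.isLt, dite_true]
  split_ifs <;> simp [eval_lamPoly]

theorem H1_apply_last (i : Fin (n - k + 1)) :
    H1 α k r i (Fin.last n) = if (i : ℕ) = n - k then -1 else 0 := by
  simp [H1]

theorem G1_apply_castSucc (a : Fin k) (j : Fin n) :
    G1 α k r a (Fin.castSucc j) = α j ^ expo k r a := by
  simp [G1]

theorem G1_apply_last (a : Fin k) :
    G1 α k r a (Fin.last n) = if (a : ℕ) = k - 1 then 1 else 0 := by
  simp [G1]

theorem sum_uCoef_mul_eval_X_pow_mul_h1RowPoly (hα : Function.Injective α) (hr : 1 ≤ r)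
    (hrk : r ≤ k) (hkn : k < n) {e : ℕ} (he : e ≤ k) (hne : e ≠ k - r) (i : Fin (n - k + 1)) :
    ∑ j, uCoef α j * (X ^ e * h1RowPoly α k r i).eval (α j)
      = if (i : ℕ) = n - k ∧ e = k then 1 else 0 := by
  have hi := i.isLt
  rw [h1RowPoly]
  split_ifs
  · omega
  · refine sum_uCoef_mul_eval_eq_zero hα ?_
    rw [← pow_add, natDegree_X_pow]
    omega
  · omega
  · exact sum_uCoef_mul_eval_X_pow_mul_lamPoly hα hr hrk hkn he hne
  · simp_rw [← pow_add, eval_pow, eval_X]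
    rw [sum_uCoef_mul_pow hα (by omega), if_pos (by omega)]
  · simp_rw [← pow_add, eval_pow, eval_X]
    rw [sum_uCoef_mul_pow hα (by omega), if_neg (by omega)]

theorem G1_mul_H1_transpose (hα : Function.Injective α) (hr : 1 ≤ r) (hrk : r ≤ k)
    (hkn : k < n) : G1 α k r * (H1 α k r)ᵀ = 0 := by
  ext a i
  rw [mul_apply, Fin.sum_univ_castSucc, Matrix.zero_apply]
  simp only [transpose_apply, G1_apply_castSucc, H1_apply_castSucc, G1_apply_last, H1_apply_last]
  have hrow : ∑ j, α j ^ expo k r a * (uCoef α j * (h1RowPoly α k r i).eval (α j))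
      = ∑ j, uCoef α j * (X ^ expo k r a * h1RowPoly α k r i).eval (α j) := by
    simp only [eval_mul, eval_pow, eval_X, mul_left_comm]
  rw [hrow, sum_uCoef_mul_eval_X_pow_mul_h1RowPoly hα hr hrk hkn (expo_le k r a)
    (expo_ne_sub k r a)]
  simp only [expo_eq_self_iff hr]
  split_ifs <;> simp_all

theorem monic_h1RowPoly (hkn : k < n) (i : Fin (n - k + 1)) : (h1RowPoly α k r i).Monic := by
  unfold h1RowPoly
  split_ifs
  exacts [monic_X_pow _, monic_lamPoly hkn, monic_X_pow _]

theorem natDegree_h1RowPoly (hkn : k < n) (i : Fin (n - k + 1)) :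
    (h1RowPoly α k r i).natDegree =
      if (i : ℕ) < n - k - 1 then (i : ℕ) else if (i : ℕ) = n - k - 1 then (n - k) + (r - 1)
      else n - k - 1 := by
  unfold h1RowPoly
  split_ifs <;> simp [natDegree_lamPoly hkn]

theorem linearIndependent_G1_rows (hα : Function.Injective α) (hkn : k < n) :
    LinearIndependent F fun a => G1 α k r a := by
  have hpow : LinearIndependent F fun a => (X ^ expo k r a : F[X]) :=
    linearIndependent_of_natDegree_injective (fun _ => pow_ne_zero _ X_ne_zero)
      (by simpa using expo_injective k r)
  refine .of_comp (LinearMap.funLeft F F Fin.castSucc) ?_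
  convert linearIndependent_mul_eval hα (fun _ => one_ne_zero) hpow fun a => ?_ using 1
  · ext a j
    simp [G1_apply_castSucc]
  · rw [degree_X_pow]
    exact_mod_cast (expo_le k r a).trans_lt hkn

theorem linearIndependent_H1_rows (hα : Function.Injective α) (hr : 1 ≤ r) (hrk : r ≤ k)
    (hkn : k < n) : LinearIndependent F fun i => H1 α k r i := by
  have hpoly : LinearIndependent F (h1RowPoly α k r) := by
    refine linearIndependent_of_natDegree_injective (fun i => (monic_h1RowPoly hkn i).ne_zero) ?_
    intro i j h
    simp only [natDegree_h1RowPoly hkn] at h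
    have := i.isLt
    have := j.isLt
    ext
    split_ifs at h <;> omega
  refine .of_comp (LinearMap.funLeft F F Fin.castSucc) ?_
  convert linearIndependent_mul_eval hα (uCoef_ne_zero hα) hpoly fun i => ?_ using 1
  · ext i j
    simp [H1_apply_castSucc]
  · rw [← natDegree_lt_iff_degree_lt (monic_h1RowPoly hkn i).ne_zero, natDegree_h1RowPoly hkn]
    split_ifs <;> omega

end

theorem H1_parity_check_general {F : Type*} [Field F] {n : ℕ}
    (α : Fin n → F) (hα : Function.Injective α) (k r : ℕ)
    (hkn : 2 * k ≤ n) (hr1 : 1 ≤ r) (hrk : r ≤ k - 1) :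
    G1 α k r * (H1 α k r)ᵀ = 0 ∧
    LinearIndependent F (fun i => H1 α k r i) ∧
    (rowSpan (H1 α k r) : Set (Fin (n + 1) → F))
      = dualSet (rowSpan (G1 α k r) : Set (Fin (n + 1) → F)) := by
  have hrk' : r ≤ k := by omega
  have hkn' : k < n := by omega
  have hGH := G1_mul_H1_transpose hα hr1 hrk' hkn'
  have hH := linearIndependent_H1_rows hα hr1 hrk' hkn'
  exact ⟨hGH, hH, rowSpan_eq_dualSet_of_mul_transpose_eq_zero hGH
    (linearIndependent_G1_rows hα hkn') hH (by omega)⟩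

/-- Theorem 4.2: `H_1` is a parity check matrix for the code `C_1` generated by `G_1`. -/
theorem H1_parity_check {F : Type*} [Field F] [Fintype F] {n : ℕ}
    (α : Fin n → F) (hα : Function.Injective α) (k r : ℕ)
    (h6 : 6 ≤ 2 * k) (hkn : 2 * k ≤ n) (hr1 : 1 ≤ r) (hrk : r ≤ k - 1) :
    G1 α k r * (H1 α k r)ᵀ = 0 ∧
    LinearIndependent F (fun i => H1 α k r i) ∧
    (rowSpan (H1 α k r) : Set (Fin (n + 1) → F))
      = dualSet (rowSpan (G1 α k r) : Set (Fin (n + 1) → F)) :=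
  H1_parity_check_general α hα k r hkn hr1 hrk
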